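/- arXiv:1909.12100 — 4 statements merged into one kernel-verified Lean document; each statement's English description precedes it below -/
import Mathlib

section
/- Let $M = \mathbb{Z}$ be regarded as a representation of the group $\mathbb{Z}$ where $n \in \mathbb{Z}$ acts by multiplication by $(-1)^n$ (the sign action). Then the first group cohomology $H^1(\mathbb{Z}, M)$ is isomorphic (as an abelian group) to $\mathbb{Z}/2\mathbb{Z}$. -/
/-- The sign representation of the group `ℤ` (written multiplicatively as
`Multiplicative ℤ`) on a `ℤ`-module `M`: the element `n` acts by multiplication
by `(-1)^n`. -/
def signRep (M : Type) [AddCommGroup M] [Module ℤ M] :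
    Representation ℤ (Multiplicative ℤ) M where
  toFun g := (((-1 : ℤˣ) ^ Multiplicative.toAdd g : ℤˣ) : ℤ) • LinearMap.id
  map_one' := by
    ext m
    simp
  map_mul' g h := by
    ext m
    simp [zpow_add, mul_smul]

/-! A 1-cocycle of `ℤ` is determined by its value at the generator, and for the sign action
every `m` is such a value, attained by the cocycle `n ↦ (n mod 2) • m`. The coboundary of `x`
takes the value `-2x` at the generator, so `H¹(ℤ, M) ≅ M / 2M`, which is `ℤ/2` for `M = ℤ`. -/

open groupCohomology Multiplicative

namespace groupCohomology

universe u

noncomputable def H1AddEquivOfSurjective {k G : Type u} [CommRing k] [Group G] {A : Rep k G}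
    {B : Type*} [AddCommGroup B] (φ : cocycles₁ A →+ B) (hφ : Function.Surjective φ)
    (hker : ∀ f, φ f = 0 ↔ ⇑f ∈ coboundaries₁ A) : H1 A ≃+ B :=
  have hπ : Function.Surjective (H1π A) := (ModuleCat.epi_iff_surjective _).1 inferInstance
  have hker_eq : (H1π A).hom.toAddMonoidHom.ker = φ.ker := by
    ext f
    exact (H1π_eq_zero_iff f).trans (hker f).symm
  (QuotientAddGroup.quotientKerEquivOfSurjective _ hπ).symm.trans <|
    (QuotientAddGroup.quotientAddEquivOfEq hker_eq).trans
      (QuotientAddGroup.quotientKerEquivOfSurjective φ hφ)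

variable {k : Type} [CommRing k] {A : Rep k (Multiplicative ℤ)}

theorem cocycles₁_ext_ofAdd_one {f₁ f₂ : cocycles₁ A} (h : f₁ (ofAdd 1) = f₂ (ofAdd 1)) :
    f₁ = f₂ := by
  have step (f : cocycles₁ A) (n : ℤ) :
      f (ofAdd (n + 1)) = A.ρ (ofAdd n) (f (ofAdd 1)) + f (ofAdd n) :=
    (mem_cocycles₁_iff f).1 f.2 _ _
  suffices ∀ n : ℤ, f₁ (ofAdd n) = f₂ (ofAdd n) from cocycles₁_ext fun g => this (toAdd g)
  intro n
  induction n using Int.induction_on with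
  | zero => exact (cocycles₁_map_one f₁).trans (cocycles₁_map_one f₂).symm
  | succ n ih => rw [step f₁, step f₂, h, ih]
  | pred n ih =>
    have h₁ := step f₁ (-n - 1)
    have h₂ := step f₂ (-n - 1)
    rw [sub_add_cancel] at h₁ h₂
    rw [h₁, h₂, h] at ih
    exact add_left_cancel ih

theorem mem_coboundaries₁_iff_ofAdd_one (f : cocycles₁ A) :
    ⇑f ∈ coboundaries₁ A ↔ ∃ x : A, A.ρ (ofAdd 1) x - x = f (ofAdd 1) := by
  constructor
  · rintro ⟨x, hx⟩
    exact ⟨x, congrFun hx (ofAdd 1)⟩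
  · rintro ⟨x, hx⟩
    have : (⟨d₀₁ A x, d₀₁_apply_mem_cocycles₁ x⟩ : cocycles₁ A) = f :=
      cocycles₁_ext_ofAdd_one hx
    exact ⟨x, congrArg Subtype.val this⟩

end groupCohomology

theorem Int.neg_one_zpow_mul_emod_two_add_emod_two (a b : ℤ) :
    (((-1 : ℤˣ) ^ a : ℤˣ) : ℤ) * (b % 2) + a % 2 = (a + b) % 2 := by
  rcases Int.even_or_odd a with ha | ha
  · rw [ha.neg_one_zpow, Units.val_one, one_mul]
    have := Int.even_iff.1 ha
    omega
  · rw [ha.neg_one_zpow, Units.val_neg, Units.val_one, neg_one_mul]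
    have := Int.odd_iff.1 ha
    omega

namespace signRep

-- `M` carries its canonical `ℤ`-module structure, so the action of `signRep M` is by `zsmul`.
variable {M : Type} [AddCommGroup M]

theorem _root_.signRep_apply (g : Multiplicative ℤ) (m : M) :
    signRep M g m = (((-1 : ℤˣ) ^ toAdd g : ℤˣ) : ℤ) • m := rfl

def parityCocycle (m : M) : cocycles₁ (Rep.of (signRep M)) :=
  ⟨fun g => (toAdd g % 2) • m, (mem_cocycles₁_iff _).2 fun g h => by
    simp only [signRep_apply, smul_smul]
    rw [← add_smul, Int.neg_one_zpow_mul_emod_two_add_emod_two, toAdd_mul]⟩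

noncomputable def evalOneModTwo :
    cocycles₁ (Rep.of (signRep M)) →+ M ⧸ (zsmulAddGroupHom 2 : M →+ M).range :=
  (QuotientAddGroup.mk' _).comp
    ((Pi.evalAddMonoidHom _ (ofAdd 1)).comp (cocycles₁ _).subtype.toAddMonoidHom)

theorem evalOneModTwo_surjective : Function.Surjective (evalOneModTwo (M := M)) := by
  intro m
  obtain ⟨m, rfl⟩ := QuotientAddGroup.mk'_surjective _ m
  exact ⟨parityCocycle m, by simp [evalOneModTwo, parityCocycle]⟩

theorem evalOneModTwo_eq_zero_iff (f : cocycles₁ (Rep.of (signRep M))) :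
    evalOneModTwo f = 0 ↔ ⇑f ∈ coboundaries₁ (Rep.of (signRep M)) := by
  have hρ (x : M) : (Rep.of (signRep M)).ρ (ofAdd 1) x - x = (2 : ℤ) • -x := by
    rw [Rep.of_ρ, signRep_apply, toAdd_ofAdd, zpow_one, Units.val_neg, Units.val_one, neg_one_smul,
      two_zsmul, sub_eq_add_neg]
  simp only [evalOneModTwo, mem_coboundaries₁_iff_ofAdd_one, hρ, AddMonoidHom.comp_apply,
    QuotientAddGroup.mk'_apply, QuotientAddGroup.eq_zero_iff, AddMonoidHom.mem_range]
  exact (Equiv.neg M).exists_congr_left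

noncomputable def H1AddEquiv :
    H1 (Rep.of (signRep M)) ≃+ M ⧸ (zsmulAddGroupHom 2 : M →+ M).range :=
  H1AddEquivOfSurjective evalOneModTwo evalOneModTwo_surjective evalOneModTwo_eq_zero_iff

end signRep

theorem Int.range_zsmulAddGroupHom (n : ℤ) :
    (zsmulAddGroupHom n : ℤ →+ ℤ).range = AddSubgroup.zmultiples n := by
  ext m
  simp only [AddMonoidHom.mem_range, AddSubgroup.mem_zmultiples_iff, zsmulAddGroupHom_apply,
    smul_eq_mul, mul_comm n]

/-- With `M = ℤ` carrying the sign action of `ℤ` (where `n` acts by `(-1)^n`),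
the first group cohomology `H¹(ℤ, M)` is isomorphic, as an abelian group, to
`ℤ/2ℤ`. -/
theorem h1_of_sign_rep_int :
    Nonempty (groupCohomology (Rep.of (signRep ℤ)) 1 ≃+ ZMod 2) :=
  ⟨signRep.H1AddEquiv.trans <|
    (QuotientAddGroup.quotientAddEquivOfEq (Int.range_zsmulAddGroupHom 2)).trans
      (Int.quotientZMultiplesNatEquivZMod 2)⟩
end

section
/- Let $E = \mathbb{C} \times \mathbb{C}^{\times} \times \mathbb{Z}$ with the product topology ($\mathbb{Z}$ discrete), and let $\sim$ be the equivalence relation on $E$ generated by $(x, y, i) \sim (x,\, x^{-j} y,\, i + j)$ for all $x \in \mathbb{C}$ with $x \neq 0$, $y \in \mathbb{C}^{\times}$, $i, j \in \mathbb{Z}$. Then the quotient space $M := E/\sim$ with the quotient topology is Hausdorff (T2). -/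
/-- The gluing relation on `E = ℂ × ℂˣ × ℤ` generating the paper's family of
abelian groups `ℂ*_ℂ(*{0})`: for `x ≠ 0`,
`(x, y, i) ∼ (x, x⁻ʲ y, i + j)`. -/
def glueRel (p q : ℂ × ℂˣ × ℤ) : Prop :=
  ∃ (hx : p.1 ≠ 0) (j : ℤ),
    q = (p.1, Units.mk0 p.1 hx ^ (-j) * p.2.1, p.2.2 + j)

abbrev GE' := ℂ × ℂˣ × ℤ

/-- One-step characterization of the equivalence closure. -/
def GRel (p q : GE') : Prop :=
  p = q ∨ ∃ (hx : p.1 ≠ 0) (j : ℤ),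
    q = (p.1, Units.mk0 p.1 hx ^ (-j) * p.2.1, p.2.2 + j)

lemma grel_symm {p q : GE'} (h : GRel p q) : GRel q p := by
  rcases h with rfl | ⟨hx, j, rfl⟩
  · exact Or.inl rfl
  · refine Or.inr ⟨hx, -j, ?_⟩
    show p = (p.1, Units.mk0 p.1 hx ^ (- -j) * (Units.mk0 p.1 hx ^ (-j) * p.2.1), (p.2.2 + j) + -j)
    rw [← mul_assoc, ← zpow_add]
    simp

lemma grel_trans {p q r : GE'} (h1 : GRel p q) (h2 : GRel q r) : GRel p r := by
  rcases h1 with rfl | ⟨hx, j, rfl⟩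
  · exact h2
  rcases h2 with rfl | ⟨hx', j', rfl⟩
  · exact Or.inr ⟨hx, j, rfl⟩
  · refine Or.inr ⟨hx, j + j', ?_⟩
    show (p.1, Units.mk0 p.1 hx ^ (-j') * (Units.mk0 p.1 hx ^ (-j) * p.2.1), (p.2.2 + j) + j')
        = (p.1, Units.mk0 p.1 hx ^ (-(j + j')) * p.2.1, p.2.2 + (j + j'))
    rw [← mul_assoc, ← zpow_add]
    have h1 : -j' + -j = -(j + j') := by ring
    rw [h1, add_assoc]

lemma eqvGen_iff {p q : GE'} : Relation.EqvGen glueRel p q ↔ GRel p q := by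
  constructor
  · intro h
    induction h with
    | rel a b hab => exact Or.inr hab
    | refl a => exact Or.inl rfl
    | symm a b _ ih => exact grel_symm ih
    | trans a b c _ _ ih1 ih2 => exact grel_trans ih1 ih2
  · rintro (rfl | h)
    · exact Relation.EqvGen.refl p
    · exact Relation.EqvGen.rel _ _ h

/-- A closed set capturing the `j`-th piece of the relation. -/
def Dset (j : ℤ) : Set (GE' × GE') :=
  {pp | pp.2.1 = pp.1.1 ∧
    (if 0 ≤ j then ((pp.2.2.1 : ℂ) * pp.1.1 ^ j.toNat = (pp.1.2.1 : ℂ))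
      else ((pp.1.2.1 : ℂ) * pp.1.1 ^ (-j).toNat = (pp.2.2.1 : ℂ))) ∧
    pp.2.2.2 = pp.1.2.2 + j}

lemma isClosed_Dset (j : ℤ) : IsClosed (Dset j) := by
  have h1 : Continuous fun pp : GE' × GE' => pp.1.1 := continuous_fst.fst
  have h2 : Continuous fun pp : GE' × GE' => pp.2.1 := continuous_snd.fst
  have hy1 : Continuous fun pp : GE' × GE' => (pp.1.2.1 : ℂ) :=
    Units.continuous_val.comp continuous_fst.snd.fst
  have hy2 : Continuous fun pp : GE' × GE' => (pp.2.2.1 : ℂ) :=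
    Units.continuous_val.comp continuous_snd.snd.fst
  have hi1 : Continuous fun pp : GE' × GE' => pp.1.2.2 + j :=
    continuous_fst.snd.snd.add continuous_const
  have hi2 : Continuous fun pp : GE' × GE' => pp.2.2.2 := continuous_snd.snd.snd
  by_cases hj : 0 ≤ j
  · have : Dset j = {pp | pp.2.1 = pp.1.1} ∩
        ({pp | (pp.2.2.1 : ℂ) * pp.1.1 ^ j.toNat = (pp.1.2.1 : ℂ)} ∩
          {pp | pp.2.2.2 = pp.1.2.2 + j}) := by
      ext pp; simp [Dset, if_pos hj]
    rw [this]
    exact IsClosed.inter (isClosed_eq h2 h1)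
      (IsClosed.inter (isClosed_eq (hy2.mul (h1.pow _)) hy1) (isClosed_eq hi2 hi1))
  · have : Dset j = {pp | pp.2.1 = pp.1.1} ∩
        ({pp | (pp.1.2.1 : ℂ) * pp.1.1 ^ (-j).toNat = (pp.2.2.1 : ℂ)} ∩
          {pp | pp.2.2.2 = pp.1.2.2 + j}) := by
      ext pp; simp [Dset, if_neg hj]
    rw [this]
    exact IsClosed.inter (isClosed_eq h2 h1)
      (IsClosed.inter (isClosed_eq (hy1.mul (h1.pow _)) hy2) (isClosed_eq hi2 hi1))

lemma zpow_cast (x : ℂˣ) (n : ℕ) : ((x : ℂ)) ^ (n : ℤ) = (x : ℂ) ^ n := zpow_natCast _ _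

lemma grel_mem_Dset {p q : GE'} (h : GRel p q) : (p, q) ∈ Dset (q.2.2 - p.2.2) := by
  rcases h with rfl | ⟨hx, j, rfl⟩
  · refine ⟨rfl, ?_, by simp⟩
    simp
  · have hval : ∀ m : ℤ, ((Units.mk0 p.1 hx ^ m : ℂˣ) : ℂ) = p.1 ^ m := by
      intro m; rw [Units.val_zpow_eq_zpow_val]; rfl
    have hj : (p.2.2 + j) - p.2.2 = j := by ring
    rw [hj]
    refine ⟨rfl, ?_, rfl⟩
    by_cases h0 : 0 ≤ j
    · simp only [h0, if_true]
      show ((Units.mk0 p.1 hx ^ (-j) * p.2.1 : ℂˣ) : ℂ) * p.1 ^ j.toNat = (p.2.1 : ℂ)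
      rw [Units.val_mul, hval, ← zpow_natCast p.1 j.toNat, Int.toNat_of_nonneg h0,
        mul_comm ((p.1 : ℂ) ^ (-j)), mul_assoc, ← zpow_add₀ hx]
      simp
    · simp only [h0, if_false]
      show (p.2.1 : ℂ) * p.1 ^ (-j).toNat = ((Units.mk0 p.1 hx ^ (-j) * p.2.1 : ℂˣ) : ℂ)
      rw [Units.val_mul, hval, ← zpow_natCast p.1 (-j).toNat,
        Int.toNat_of_nonneg (by omega : (0:ℤ) ≤ -j), mul_comm]

lemma dset_grel {p q : GE'} {j : ℤ} (h : (p, q) ∈ Dset j) : GRel p q := by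
  obtain ⟨hx1, hmul, hi⟩ := h
  simp only at hx1 hmul hi
  by_cases hx : p.1 = 0
  · by_cases h0 : 0 ≤ j
    · simp only [if_pos h0] at hmul
      rcases eq_or_lt_of_le h0 with h00 | hpos
      · have hj0 : j = 0 := h00.symm
        subst hj0
        simp at hmul hi
        left
        exact (Prod.ext hx1 (Prod.ext (Units.ext hmul.symm).symm hi)).symm
      · exfalso
        rw [hx, zero_pow (by omega : j.toNat ≠ 0), mul_zero] at hmul
        exact p.2.1.ne_zero hmul.symm
    · exfalso
      simp only [if_neg h0] at hmul
      rw [hx, zero_pow (by omega : (-j).toNat ≠ 0), mul_zero] at hmul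
      exact q.2.1.ne_zero hmul.symm
  · refine Or.inr ⟨hx, j, ?_⟩
    have hval : ((Units.mk0 p.1 hx ^ (-j) : ℂˣ) : ℂ) = p.1 ^ (-j) := by
      rw [Units.val_zpow_eq_zpow_val]; rfl
    have hu : q.2.1 = Units.mk0 p.1 hx ^ (-j) * p.2.1 := by
      apply Units.ext
      rw [Units.val_mul, hval]
      by_cases h0 : 0 ≤ j
      · simp only [if_pos h0] at hmul
        rw [← zpow_natCast p.1 j.toNat, Int.toNat_of_nonneg h0] at hmul
        have hne : p.1 ^ (j : ℤ) ≠ 0 := zpow_ne_zero _ hx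
        have hxj : p.1 ^ (-j : ℤ) * p.1 ^ (j : ℤ) = 1 := by
          rw [← zpow_add₀ hx]; simp
        refine mul_right_cancel₀ hne ?_
        rw [hmul, mul_comm ((p.1 : ℂ) ^ (-j : ℤ)), mul_assoc, hxj, mul_one]
      · simp only [if_neg h0] at hmul
        rw [← zpow_natCast p.1 (-j).toNat,
          Int.toNat_of_nonneg (by omega : (0:ℤ) ≤ -j)] at hmul
        rw [← hmul, mul_comm]
    exact Prod.ext hx1 (Prod.ext hu hi)

lemma isClosed_rel : IsClosed {pp : GE' × GE' | Relation.EqvGen glueRel pp.1 pp.2} := by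
  rw [← isOpen_compl_iff]
  rw [isOpen_iff_forall_mem_open]
  intro pp hpp
  refine ⟨((fun qq : GE' × GE' => (qq.1.2.2, qq.2.2.2)) ⁻¹' {(pp.1.2.2, pp.2.2.2)}) ∩
      (Dset (pp.2.2.2 - pp.1.2.2))ᶜ, ?_, ?_, ?_⟩
  · rintro qq ⟨hq1, hq2⟩
    intro hq
    apply hq2
    have := grel_mem_Dset (eqvGen_iff.mp hq)
    have h12 : (qq.1.2.2, qq.2.2.2) = (pp.1.2.2, pp.2.2.2) := hq1
    have hij : qq.2.2.2 - qq.1.2.2 = pp.2.2.2 - pp.1.2.2 := by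
      have h1 := congrArg Prod.fst h12
      have h2 := congrArg Prod.snd h12
      simp only at h1 h2
      rw [h1, h2]
    rwa [hij] at this
  · refine IsOpen.inter ?_ (isClosed_Dset _).isOpen_compl
    exact (isOpen_discrete _).preimage
      ((continuous_fst.snd.snd).prodMk (continuous_snd.snd.snd))
  · refine ⟨rfl, fun hmem => hpp ?_⟩
    exact eqvGen_iff.mpr (dset_grel hmem)

abbrev Sgood := {p : GE' // p.1 ≠ 0}

noncomputable def gmap (j : ℤ) (s : Sgood) : GE' :=
  (s.1.1, Units.mk0 s.1.1 s.2 ^ (-j) * s.1.2.1, s.1.2.2 + j)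

lemma continuous_gmap (j : ℤ) : Continuous (gmap j) := by
  have hx : Continuous fun s : Sgood => s.1.1 := continuous_fst.comp continuous_subtype_val
  have hzpow : ∀ m : ℤ, Continuous fun s : Sgood => (s.1.1 : ℂ) ^ m := by
    intro m
    exact hx.zpow₀ m fun s => Or.inl s.2
  have hu : Continuous fun s : Sgood => Units.mk0 s.1.1 s.2 ^ (-j) := by
    rw [Units.continuous_iff]
    constructor
    · have : (fun s : Sgood => ((Units.mk0 s.1.1 s.2 ^ (-j) : ℂˣ) : ℂ))
          = fun s : Sgood => (s.1.1 : ℂ) ^ (-j) := by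
        funext s
        rw [Units.val_zpow_eq_zpow_val]; rfl
      rw [Function.comp_def, this]
      exact hzpow (-j)
    · have : (fun s : Sgood => (((Units.mk0 s.1.1 s.2 ^ (-j))⁻¹ : ℂˣ) : ℂ))
          = fun s : Sgood => (s.1.1 : ℂ) ^ j := by
        funext s
        rw [← zpow_neg, Units.val_zpow_eq_zpow_val, neg_neg]; rfl
      rw [this]
      exact hzpow j
  refine Continuous.prodMk hx (Continuous.prodMk ?_ ?_)
  · exact hu.mul ((continuous_snd.fst).comp continuous_subtype_val)
  · exact ((continuous_snd.snd).comp continuous_subtype_val).add continuous_const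

lemma sat_eq (U : Set GE') :
    {p' | ∃ p ∈ U, Relation.EqvGen glueRel p p'}
      = U ∪ ⋃ j : ℤ, Subtype.val '' (gmap j ⁻¹' U) := by
  ext p'
  simp only [Set.mem_setOf_eq, Set.mem_union, Set.mem_iUnion, Set.mem_image, Set.mem_preimage]
  constructor
  · rintro ⟨p, hpU, hp⟩
    rcases grel_symm (eqvGen_iff.mp hp) with rfl | ⟨hx, j, rfl⟩
    · exact Or.inl hpU
    · exact Or.inr ⟨j, ⟨p', hx⟩, hpU, rfl⟩
  · rintro (h | ⟨j, s, hU, rfl⟩)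
    · exact ⟨p', h, Relation.EqvGen.refl _⟩
    · refine ⟨gmap j s, hU, Relation.EqvGen.symm _ _ (eqvGen_iff.mpr ?_)⟩
      exact Or.inr ⟨s.2, j, rfl⟩

lemma isOpenMap_mk :
    IsOpenMap (Quotient.mk (Relation.EqvGen.setoid glueRel)) := by
  intro U hU
  have hqm : Topology.IsQuotientMap (Quotient.mk (Relation.EqvGen.setoid glueRel)) :=
    isQuotientMap_quot_mk
  rw [← hqm.isOpen_preimage]
  have hsat : Quotient.mk (Relation.EqvGen.setoid glueRel)
        ⁻¹' (Quotient.mk (Relation.EqvGen.setoid glueRel) '' U)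
      = {p' | ∃ p ∈ U, Relation.EqvGen glueRel p p'} := by
    ext p'
    simp only [Set.mem_preimage, Set.mem_image, Set.mem_setOf_eq]
    constructor
    · rintro ⟨p, hpU, hp⟩
      exact ⟨p, hpU, Quotient.exact hp⟩
    · rintro ⟨p, hpU, hp⟩
      exact ⟨p, hpU, Quotient.sound hp⟩
  rw [hsat, sat_eq]
  refine hU.union (isOpen_iUnion fun j => ?_)
  have hV : IsOpen {p : GE' | p.1 ≠ 0} :=
    isOpen_compl_singleton.preimage continuous_fst
  exact hV.isOpenMap_subtype_val _ (hU.preimage (continuous_gmap j))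

/-- The quotient of `E = ℂ × ℂˣ × ℤ` (with the product topology, `ℤ` discrete)
by the equivalence relation generated by `(x, y, i) ∼ (x, x⁻ʲ y, i + j)` for
`x ≠ 0`, equipped with the quotient topology, is Hausdorff. -/
theorem glueQuotient_t2 : T2Space (Quotient (Relation.EqvGen.setoid glueRel)) := by
  rw [t2_iff_isClosed_diagonal, ← isOpen_compl_iff]
  have key : (Set.diagonal (Quotient (Relation.EqvGen.setoid glueRel)))ᶜ
      = Prod.map (Quotient.mk (Relation.EqvGen.setoid glueRel))
          (Quotient.mk (Relation.EqvGen.setoid glueRel))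
          '' {pp : GE' × GE' | Relation.EqvGen glueRel pp.1 pp.2}ᶜ := by
    ext ⟨a, b⟩
    simp only [Set.mem_compl_iff, Set.mem_diagonal_iff, Set.mem_image,
      Set.mem_setOf_eq, Prod.map_apply]
    constructor
    · intro hab
      obtain ⟨p, rfl⟩ := Quotient.exists_rep a
      obtain ⟨p', rfl⟩ := Quotient.exists_rep b
      exact ⟨(p, p'), fun h => hab (Quotient.sound h), rfl⟩
    · rintro ⟨⟨p, p'⟩, hnp, heq⟩ hab
      injection heq with h1 h2
      subst h1; subst h2
      exact hnp (Quotient.exact hab)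
  rw [key]
  exact (isOpenMap_mk.prodMap isOpenMap_mk) _ isClosed_rel.isOpen_compl
end

section
/- Let $E = \mathbb{C} \times \mathbb{C}^{\times} \times \mathbb{Z}$ and let $\sim$ be the equivalence relation on $E$ generated by $(x, y, i) \sim (x,\, x^{-j} y,\, i + j)$ for all $x \neq 0$, $j \in \mathbb{Z}$. For $a \in \mathbb{C}^{\times}$ define $\Phi_a : E \to E$ by $\Phi_a(x, y, i) = (a x,\, a^{-i} y,\, i)$. Then: (1) $\Phi_a$ preserves $\sim$, i.e. $p \sim q$ implies $\Phi_a(p) \sim \Phi_a(q)$; (2) $\Phi_1 = \mathrm{id}$ and $\Phi_a \circ \Phi_b = \Phi_{ab}$ for all $a, b \in \mathbb{C}^{\times}$. Consequently the maps $\Phi_a$ descend to a well-defined action of the group $\mathbb{C}^{\times}$ on the quotient $E/\sim$. -/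
/-- The action map `Φₐ(x, y, i) = (a x, a⁻ⁱ y, i)` of `a ∈ ℂˣ` on
`E = ℂ × ℂˣ × ℤ`. -/
def glueAct (a : ℂˣ) (p : ℂ × ℂˣ × ℤ) : ℂ × ℂˣ × ℤ :=
  ((a : ℂ) * p.1, a ^ (-p.2.2) * p.2.1, p.2.2)

lemma glueAct_rel (a : ℂˣ) (p q : ℂ × ℂˣ × ℤ) (h : glueRel p q) :
    glueRel (glueAct a p) (glueAct a q) := by
  obtain ⟨hx, j, rfl⟩ := h
  refine ⟨mul_ne_zero a.ne_zero hx, j, ?_⟩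
  simp only [glueAct]
  refine Prod.ext rfl (Prod.ext ?_ rfl)
  have : Units.mk0 ((a : ℂ) * p.1) (mul_ne_zero a.ne_zero hx)
      = a * Units.mk0 p.1 hx := by
    ext; simp
  rw [this, mul_zpow]
  push_cast
  rw [neg_add, zpow_add]
  simp [mul_comm, mul_assoc, mul_left_comm]

/-- For every `a ∈ ℂˣ`, the map `Φₐ(x, y, i) = (a x, a⁻ⁱ y, i)` preserves the
equivalence relation generated by the gluing relation; moreover `Φ₁ = id` and
`Φₐ ∘ Φ_b = Φ_{ab}`.  Consequently the maps `Φₐ` descend to a well-defined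
action of the group `ℂˣ` on the quotient. -/
theorem glueAct_descends :
    (∀ (a : ℂˣ) (p q : ℂ × ℂˣ × ℤ),
        Relation.EqvGen glueRel p q →
          Relation.EqvGen glueRel (glueAct a p) (glueAct a q)) ∧
    glueAct 1 = id ∧
    (∀ a b : ℂˣ, glueAct a ∘ glueAct b = glueAct (a * b)) := by
  refine ⟨?_, ?_, ?_⟩
  · intro a p q h
    induction h with
    | rel x y hxy => exact Relation.EqvGen.rel _ _ (glueAct_rel a _ _ hxy)
    | refl x => exact Relation.EqvGen.refl _
    | symm x y _ ih => exact ih.symm _ _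
    | trans x y z _ _ ih1 ih2 => exact ih1.trans _ _ _ ih2
  · funext p
    simp [glueAct]
  · intro a b
    funext p
    simp only [glueAct, Function.comp_apply]
    refine Prod.ext ?_ (Prod.ext ?_ rfl)
    · push_cast; ring
    · rw [mul_zpow, mul_assoc]
end

section
/- Let $E = \mathbb{C} \times \mathbb{C}^{\times} \times \mathbb{Z}$ and let $\sim$ be the equivalence relation on $E$ generated by $(x, y, i) \sim (x,\, x^{-j} y,\, i + j)$ for all $x \neq 0$, $j \in \mathbb{Z}$. Then for each fixed $i \in \mathbb{Z}$, the chart map $\mathbb{C} \times \mathbb{C}^{\times} \to E/\sim$, $(x, y) \mapsto [(x, y, i)]$, is injective. -/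
/-- An invariant of the gluing relation. -/
noncomputable def glueInv (p : ℂ × ℂˣ × ℤ) : ℂ × ℂˣ × ℤ :=
  if hx : p.1 ≠ 0 then (p.1, Units.mk0 p.1 hx ^ p.2.2 * p.2.1, 0)
  else (p.1, p.2.1, p.2.2)

lemma glueInv_eq_of_rel {p q : ℂ × ℂˣ × ℤ} (h : glueRel p q) :
    glueInv p = glueInv q := by
  obtain ⟨hx, j, rfl⟩ := h
  simp only [glueInv, dif_pos hx]
  refine Prod.ext rfl (Prod.ext ?_ rfl)
  simp [zpow_add, mul_assoc, ← zpow_add, zpow_neg]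
  group

lemma glueInv_eq_of_eqvGen {p q : ℂ × ℂˣ × ℤ}
    (h : Relation.EqvGen glueRel p q) : glueInv p = glueInv q := by
  induction h with
  | rel _ _ h => exact glueInv_eq_of_rel h
  | refl => rfl
  | symm _ _ _ ih => exact ih.symm
  | trans _ _ _ _ _ ih1 ih2 => exact ih1.trans ih2

/-- For each fixed `i ∈ ℤ`, the chart map `(x, y) ↦ [(x, y, i)]` from
`ℂ × ℂˣ` to the quotient of `E = ℂ × ℂˣ × ℤ` by the equivalence relation
generated by the gluing relation is injective. -/
theorem glue_chart_injective (i : ℤ) :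
    Function.Injective fun p : ℂ × ℂˣ =>
      Quotient.mk (Relation.EqvGen.setoid glueRel) (p.1, p.2, i) := by
  rintro ⟨x, y⟩ ⟨x', y'⟩ h
  have h' : Relation.EqvGen glueRel (x, y, i) (x', y', i) := Quotient.exact h
  have hinv := glueInv_eq_of_eqvGen h'
  unfold glueInv at hinv
  by_cases hx : x ≠ 0 <;> by_cases hx' : x' ≠ 0
  · rw [dif_pos hx, dif_pos hx'] at hinv
    simp only [Prod.mk.injEq] at hinv
    obtain ⟨h1, h2, -⟩ := hinv
    subst h1
    have := mul_left_cancel h2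
    simp [Prod.ext_iff, this]
  · rw [dif_pos hx, dif_neg hx'] at hinv
    simp only [Prod.mk.injEq] at hinv
    push_neg at hx'
    exact absurd (hinv.1.trans hx') hx
  · rw [dif_neg hx, dif_pos hx'] at hinv
    simp only [Prod.mk.injEq] at hinv
    push_neg at hx
    exact absurd (hinv.1.symm.trans hx) hx'
  · rw [dif_neg hx, dif_neg hx'] at hinv
    simp only [Prod.mk.injEq] at hinv
    push_neg at hx hx'
    simp [Prod.ext_iff, hx, hx', hinv.2.1]
end
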